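/- arXiv:math/0210103 — 4 statements merged into one kernel-verified Lean document; each statement's English description precedes it below -/
import Mathlib

section
/- Let T : V → W be linear between finite-dimensional real vector spaces, ω skew-symmetric bilinear on W, and J an (ω,T)-tame complex structure on V. Then there is a unique complex structure T_*J on the image T(V) ⊆ W making T complex linear, i.e. T ∘ J = (T_*J) ∘ T on V; moreover T_*J is ω-tame on T(V) (ω(w, (T_*J)w) > 0 for all nonzero w ∈ T(V)). -/
/-!
Tameness forces `J` to preserve `ker T`: if `T v = 0` but `T (J v) ≠ 0`, then
`ω (T (J v)) (T (J (J v))) = ω (T (J v)) (-T v) = 0`, contradicting tameness at `J v`.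
Hence `T ∘ J` descends through `V ⧸ ker T ≃ T(V)` to an endomorphism `K` of `T(V)` with
`K (T v) = T (J v)`; it squares to `-1` because `J` does, it is unique because every
point of `T(V)` is some `T v`, and its tameness is that of `J` read through `T`.
-/

open LinearMap

namespace LinearMap

section Pushforward

variable {R M N : Type*} [CommRing R] [AddCommGroup M] [Module R M] [AddCommGroup N] [Module R N]
  (T : M →ₗ[R] N) (J : M →ₗ[R] M)

theorem ker_le_ker_comp_of_tame [PartialOrder R] (ω : N →ₗ[R] N →ₗ[R] R)
    (hJ : ∀ v, J (J v) = -v) (htame : ∀ v, T v ≠ 0 → 0 < ω (T v) (T (J v))) :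
    ker T ≤ ker (T ∘ₗ J) := by
  intro v hv
  rw [mem_ker] at hv
  by_contra hJv
  have := htame (J v) hJv
  rw [hJ, map_neg, hv, neg_zero, map_zero] at this
  exact lt_irrefl 0 this

/-- The paper's `T_*J`. -/
noncomputable def pushforwardOnRange (h : ker T ≤ ker (T ∘ₗ J)) : range T →ₗ[R] range T :=
  (ker T).liftQ (T.rangeRestrict ∘ₗ J)
      (by rwa [ker_comp, ker_rangeRestrict, ← ker_comp]) ∘ₗ
    (T.quotKerEquivRange.symm : range T →ₗ[R] M ⧸ ker T)

variable {T J}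

@[simp]
theorem pushforwardOnRange_apply_mk (h : ker T ≤ ker (T ∘ₗ J)) (v : M) :
    pushforwardOnRange T J h ⟨T v, mem_range_self T v⟩ = ⟨T (J v), mem_range_self T (J v)⟩ := by
  ext
  simp [pushforwardOnRange, quotKerEquivRange_symm_apply_image]

theorem eq_pushforwardOnRange (h : ker T ≤ ker (T ∘ₗ J)) (K : range T →ₗ[R] range T)
    (hK : ∀ v, (K ⟨T v, mem_range_self T v⟩ : N) = T (J v)) :
    K = pushforwardOnRange T J h := by
  ext ⟨_, v, rfl⟩
  rw [hK, pushforwardOnRange_apply_mk]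

theorem pushforwardOnRange_apply_apply (h : ker T ≤ ker (T ∘ₗ J)) (hJ : ∀ v, J (J v) = -v)
    (w : range T) : pushforwardOnRange T J h (pushforwardOnRange T J h w) = -w := by
  obtain ⟨_, v, rfl⟩ := w
  ext
  simp [hJ]

end Pushforward

end LinearMap

theorem stmt2_general {V W : Type*} [AddCommGroup V] [Module ℝ V]
    [AddCommGroup W] [Module ℝ W]
    (T : V →ₗ[ℝ] W)
    (ω : W →ₗ[ℝ] W →ₗ[ℝ] ℝ)
    (J : V →ₗ[ℝ] V) (hJ : ∀ v : V, J (J v) = -v)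
    (htame : ∀ v : V, T v ≠ 0 → 0 < ω (T v) (T (J v))) :
    ∃ K : LinearMap.range T →ₗ[ℝ] LinearMap.range T,
      (∀ v : V, (K ⟨T v, LinearMap.mem_range_self T v⟩ : W) = T (J v)) ∧
      (∀ w : LinearMap.range T, K (K w) = -w) ∧
      (∀ w : LinearMap.range T, w ≠ 0 → 0 < ω (w : W) (K w : W)) ∧
      (∀ K' : LinearMap.range T →ₗ[ℝ] LinearMap.range T,
        (∀ v : V, (K' ⟨T v, LinearMap.mem_range_self T v⟩ : W) = T (J v)) → K' = K) := by
  have hker := ker_le_ker_comp_of_tame T J ω hJ htame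
  refine ⟨pushforwardOnRange T J hker, fun v => by rw [pushforwardOnRange_apply_mk],
    pushforwardOnRange_apply_apply hker hJ, ?_, fun K' hK' => eq_pushforwardOnRange hker K' hK'⟩
  rintro ⟨_, v, rfl⟩ hv
  rw [pushforwardOnRange_apply_mk]
  exact htame v fun h => hv (Subtype.ext h)

/-- For an `(ω,T)`-tame complex structure `J` on `V`, there is a unique complex
structure `T_*J` on the image `T(V) ⊆ W` making `T` complex linear, and it is
`ω`-tame on `T(V)`. -/
theorem stmt2 {V W : Type*} [AddCommGroup V] [Module ℝ V] [FiniteDimensional ℝ V]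
    [AddCommGroup W] [Module ℝ W] [FiniteDimensional ℝ W]
    (T : V →ₗ[ℝ] W)
    (ω : W →ₗ[ℝ] W →ₗ[ℝ] ℝ) (hskew : ∀ v w : W, ω v w = -ω w v)
    (J : V →ₗ[ℝ] V) (hJ : ∀ v : V, J (J v) = -v)
    (htame : ∀ v : V, T v ≠ 0 → 0 < ω (T v) (T (J v))) :
    ∃ K : LinearMap.range T →ₗ[ℝ] LinearMap.range T,
      (∀ v : V, (K ⟨T v, LinearMap.mem_range_self T v⟩ : W) = T (J v)) ∧
      (∀ w : LinearMap.range T, K (K w) = -w) ∧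
      (∀ w : LinearMap.range T, w ≠ 0 → 0 < ω (w : W) (K w : W)) ∧
      (∀ K' : LinearMap.range T →ₗ[ℝ] LinearMap.range T,
        (∀ v : V, (K' ⟨T v, LinearMap.mem_range_self T v⟩ : W) = T (J v)) → K' = K) :=
  stmt2_general T ω J hJ htame
end

section
/- Let J : ℝ^{2n} → ℝ^{2n} (n ≥ 2) be a linear complex structure such that every 1-dimensional complex subspace of ℂⁿ = ℝ^{2n} (with respect to the standard structure i) is J-invariant. Then J = i or J = -i; if furthermore J induces the same orientation as i (equivalently, J agrees with i on at least one complex line), then J = i. -/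
/-!
If every vector `v` is an eigenvector of `J`, say `J v = a v • v`, then additivity of `J`
applied to `v + w` forces `a v = a w` whenever `v, w` are `ℂ`-linearly independent. In complex
dimension at least two any two nonzero vectors are joined by such comparisons through a third
vector, so `J` is multiplication by a single scalar `c`, and `J² = -1` gives `c² = -1`.
-/

namespace AddMonoidHom

variable {K V : Type*} [Field K] [AddCommGroup V] [Module K V]
  {f : V →+ V}

theorem eigenvalue_eq_of_linearIndependent_pair (hf : ∀ v, ∃ a : K, f v = a • v)
    {v w : V} {a b : K} (hv : f v = a • v) (hw : f w = b • w)
    (hvw : LinearIndependent K ![v, w]) : a = b := by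
  obtain ⟨c, hc⟩ := hf (v + w)
  have hsum : (c - a) • v + (c - b) • w = 0 := by
    rw [map_add, hv, hw] at hc
    linear_combination (norm := module) -hc
  obtain ⟨hca, hcb⟩ := LinearIndependent.pair_iff.mp hvw _ _ hsum
  exact (sub_eq_zero.mp hca).symm.trans (sub_eq_zero.mp hcb)

theorem eigenvalue_eq_of_one_lt_rank (hf : ∀ v, ∃ a : K, f v = a • v)
    (hV : 1 < Module.rank K V) {v w : V} {a b : K}
    (hv₀ : v ≠ 0) (hw₀ : w ≠ 0) (hv : f v = a • v) (hw : f w = b • w) : a = b := by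
  obtain ⟨y, hvy⟩ := exists_linearIndependent_pair_of_one_lt_rank hV hv₀
  obtain ⟨d, hy⟩ := hf y
  by_cases hvw : LinearIndependent K ![v, w]
  · exact eigenvalue_eq_of_linearIndependent_pair hf hv hw hvw
  -- `f` is only additive, so proportional vectors are compared through a third one
  obtain ⟨t, rfl⟩ : ∃ t : K, t • v = w := by
    simpa [LinearIndependent.pair_iff' hv₀] using hvw
  have hwy : LinearIndependent K ![t • v, y] := by
    rw [LinearIndependent.pair_iff' hw₀]
    rw [LinearIndependent.pair_iff' hv₀] at hvy
    exact fun s => smul_smul s t v ▸ hvy (s * t)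
  exact (eigenvalue_eq_of_linearIndependent_pair hf hv hy hvy).trans
    (eigenvalue_eq_of_linearIndependent_pair hf hw hy hwy).symm

theorem exists_eq_smul_of_forall_exists_eq_smul (hf : ∀ v, ∃ a : K, f v = a • v)
    (hV : 1 < Module.rank K V) :
    ∃ c : K, ∀ v, f v = c • v := by
  have : Nontrivial V := rank_pos_iff_nontrivial.mp (zero_lt_one.trans hV)
  obtain ⟨v₀, hv₀⟩ := exists_ne (0 : V)
  obtain ⟨c, hc⟩ := hf v₀
  refine ⟨c, fun v => ?_⟩
  rcases eq_or_ne v 0 with rfl | hv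
  · simp
  obtain ⟨a, ha⟩ := hf v
  rwa [eigenvalue_eq_of_one_lt_rank hf hV hv hv₀ ha hc] at ha

end AddMonoidHom

theorem Complex.eq_I_or_eq_neg_I_of_smul_smul_eq_neg {V : Type*} [AddCommGroup V] [Module ℂ V]
    {c : ℂ} {v : V} (hv : v ≠ 0) (h : c • c • v = -v) : c = I ∨ c = -I := by
  have hcc : (c * c + 1) • v = 0 := by
    rw [add_smul, mul_smul, h, one_smul, neg_add_cancel]
  rw [smul_eq_zero, or_iff_left hv, ← neg_neg (1 : ℂ), ← I_mul_I, ← sub_eq_add_neg,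
    sub_eq_zero] at hcc
  exact mul_self_eq_mul_self_iff.mp hcc

/-- If every `i`-complex line of `ℂⁿ` (`n ≥ 2`) is invariant under an ℝ-linear
complex structure `J`, then `J = i` or `J = -i`; if moreover `J` agrees with `i`
on some complex line, then `J = i`. -/
theorem stmt6 (n : ℕ) (hn : 2 ≤ n)
    (J : (Fin n → ℂ) →ₗ[ℝ] (Fin n → ℂ))
    (hJ : ∀ v : Fin n → ℂ, J (J v) = -v)
    (hline : ∀ v : Fin n → ℂ, ∀ w ∈ Submodule.span ℂ {v}, J w ∈ Submodule.span ℂ {v}) :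
    ((∀ v : Fin n → ℂ, J v = Complex.I • v) ∨ (∀ v : Fin n → ℂ, J v = -(Complex.I • v))) ∧
    ((∃ v : Fin n → ℂ, v ≠ 0 ∧ J v = Complex.I • v) → ∀ v : Fin n → ℂ, J v = Complex.I • v) := by
  have hrank : 1 < Module.rank ℂ (Fin n → ℂ) := by
    rw [rank_fin_fun]
    exact_mod_cast hn
  have heigen (v : Fin n → ℂ) : ∃ a : ℂ, J.toAddMonoidHom v = a • v := by
    obtain ⟨a, ha⟩ := Submodule.mem_span_singleton.mp
      (hline v v (Submodule.mem_span_singleton_self v))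
    exact ⟨a, ha.symm⟩
  obtain ⟨c, hc⟩ := J.toAddMonoidHom.exists_eq_smul_of_forall_exists_eq_smul heigen hrank
  replace hc (v : Fin n → ℂ) : J v = c • v := hc v
  have : Nontrivial (Fin n → ℂ) := rank_pos_iff_nontrivial.mp (zero_lt_one.trans hrank)
  obtain ⟨v₀, hv₀⟩ := exists_ne (0 : Fin n → ℂ)
  have hc_sq : c • c • v₀ = -v₀ := by rw [← hc, ← hc, hJ]
  refine ⟨?_, fun ⟨v, hv, hJv⟩ => ?_⟩
  · rcases Complex.eq_I_or_eq_neg_I_of_smul_smul_eq_neg hv₀ hc_sq with rfl | rfl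
    · exact .inl hc
    · exact .inr fun v => (hc v).trans (neg_smul _ _)
  · rw [hc] at hJv
    rwa [smul_left_injective ℂ hv hJv] at hc
end

section
/- A linear complex structure J on ℝ^{2n}, n ≥ 2, is determined by its 1-dimensional oriented complex subspaces: if J and J' are complex structures on ℝ^{2n} with the same set of oriented complex lines (real 2-planes invariant under the structure, with the induced orientation), then J = J'. -/
/-!
View `V` as a complex vector space through `J`. The hypothesis says `J' v = λ(v) v` for a
scalar `λ(v) = a + b i` with `b > 0`. Comparing `J' (v + w) = J' v + J' w` for `w` outside the
complex line of `v` forces `λ(v) = λ(w)`; since the complex dimension is at least two, every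
`v` has such a `w`, also shared with `J v`, so `λ(J v) = λ(v)`. Then `J'² = -1` reads `λ² = -1`,
and `b > 0` selects `λ = i`, i.e. `J' = J`.
-/

open Submodule Module LinearMap

namespace LinearMap

variable {V : Type*} [AddCommGroup V] [Module ℝ V]

/-- The real span of `v` and `J v`, which is the `J`-complex line through `v` when `v ≠ 0`. -/
def complexLine (J : V →ₗ[ℝ] V) (v : V) : Submodule ℝ V :=
  span ℝ {v, J v}

lemma apply_mem_complexLine {J : V →ₗ[ℝ] V} (hJ : ∀ v, J (J v) = -v) {v u : V}
    (hu : u ∈ complexLine J v) : J u ∈ complexLine J v := by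
  obtain ⟨x, y, rfl⟩ := mem_span_pair.mp hu
  exact mem_span_pair.mpr ⟨-y, x, by simp only [map_add, map_smul, hJ]; module⟩

lemma complexLine_apply {J : V →ₗ[ℝ] V} (hJ : ∀ v, J (J v) = -v) (v : V) :
    complexLine J (J v) = complexLine J v := by
  have hJv : J v ∈ complexLine J (J v) := subset_span (by simp)
  refine le_antisymm (span_le.mpr ?_) (span_le.mpr ?_) <;>
    simp only [Set.insert_subset_iff, Set.singleton_subset_iff, SetLike.mem_coe]
  · exact ⟨subset_span (by simp), apply_mem_complexLine hJ (subset_span (by simp))⟩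
  · refine ⟨?_, subset_span (by simp)⟩
    simpa [hJ] using neg_mem (apply_mem_complexLine hJ hJv)

/-- The combination `z • u - t • J u` of `u = z • w + t • J w` is `(z² + t²) • w`. -/
lemma eq_zero_of_smul_add_smul_apply_mem {J : V →ₗ[ℝ] V} (hJ : ∀ v, J (J v) = -v)
    {L : Submodule ℝ V} (hL : ∀ u ∈ L, J u ∈ L) {w : V} (hw : w ∉ L) {z t : ℝ}
    (h : z • w + t • J w ∈ L) : z = 0 ∧ t = 0 := by
  have hsum : (z ^ 2 + t ^ 2) • w ∈ L := by
    have key : (z ^ 2 + t ^ 2) • w = z • (z • w + t • J w) - t • J (z • w + t • J w) := by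
      simp only [map_add, map_smul, hJ]; module
    rw [key]
    exact L.sub_mem (L.smul_mem z h) (L.smul_mem t (hL _ h))
  have hzt : z ^ 2 + t ^ 2 = 0 := by
    by_contra hne
    exact hw ((L.smul_mem_iff hne).mp hsum)
  constructor <;> nlinarith [sq_nonneg z, sq_nonneg t]

lemma eq_zero_of_smul_add_smul_apply_eq_zero {J : V →ₗ[ℝ] V} (hJ : ∀ v, J (J v) = -v)
    {v : V} (hv : v ≠ 0) {x y : ℝ} (h : x • v + y • J v = 0) : x = 0 ∧ y = 0 :=
  eq_zero_of_smul_add_smul_apply_mem hJ (L := ⊥) (by simp) (by simpa using hv) (by simp [h])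

lemma exists_notMem_complexLine (J : V →ₗ[ℝ] V) (hV : 2 < finrank ℝ V) (v : V) :
    ∃ w, w ∉ complexLine J v := by
  classical
  have : Module.Finite ℝ V := Module.finite_of_finrank_pos (by omega)
  have hcard : ({v, J v} : Set V).toFinset.card < finrank ℝ V := by
    rw [Set.toFinset_insert, Set.toFinset_singleton]
    exact (Finset.card_insert_le _ _).trans_lt (by simpa using hV)
  obtain ⟨w, -, hw⟩ := SetLike.exists_of_lt (span_lt_top_of_card_lt_finrank hcard)
  exact ⟨w, hw⟩

lemma coeff_eq_of_notMem_complexLine {J J' : V →ₗ[ℝ] V} (hJ : ∀ v, J (J v) = -v)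
    {a b : V → ℝ} (hab : ∀ u, u ≠ 0 → J' u = a u • u + b u • J u)
    {v w : V} (hv : v ≠ 0) (hw : w ∉ complexLine J v) : a v = a w ∧ b v = b w := by
  have hw0 : w ≠ 0 := by rintro rfl; exact hw (zero_mem _)
  have hvw : v + w ≠ 0 := by
    intro h
    rw [eq_neg_of_add_eq_zero_right h] at hw
    exact hw (neg_mem (subset_span (by simp)))
  have hadd : ((a (v + w) - a v) • v + (b (v + w) - b v) • J v) +
      ((a (v + w) - a w) • w + (b (v + w) - b w) • J w) = 0 := by
    have := map_add J' v w
    rw [hab _ hvw, hab _ hv, hab _ hw0, map_add] at this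
    linear_combination (norm := module) this
  obtain ⟨hw₁, hw₂⟩ : a (v + w) - a w = 0 ∧ b (v + w) - b w = 0 := by
    refine eq_zero_of_smul_add_smul_apply_mem hJ (fun _ ↦ apply_mem_complexLine hJ) hw ?_
    rw [eq_neg_of_add_eq_zero_right hadd]
    exact neg_mem (add_mem (smul_mem _ _ (subset_span (by simp)))
      (smul_mem _ _ (subset_span (by simp))))
  obtain ⟨hv₁, hv₂⟩ : a (v + w) - a v = 0 ∧ b (v + w) - b v = 0 := by
    refine eq_zero_of_smul_add_smul_apply_eq_zero hJ hv ?_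
    simpa [hw₁, hw₂] using hadd
  constructor <;> linarith

/-- `J'² = -1` reads `(a + b i)² = -1`, and `b > 0` selects `a + b i = i`. -/
lemma apply_eq_of_apply_eq_smul_add_smul {J J' : V →ₗ[ℝ] V} (hJ : ∀ v, J (J v) = -v)
    {v : V} (hv : v ≠ 0) (hJ'v : J' (J' v) = -v) {a b : ℝ} (hb : 0 < b)
    (h₁ : J' v = a • v + b • J v) (h₂ : J' (J v) = a • J v + b • J (J v)) : J' v = J v := by
  have hsq : (a ^ 2 - b ^ 2 + 1) • v + (2 * a * b) • J v = 0 := by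
    rw [h₁, map_add, map_smul, map_smul, h₁, h₂, hJ] at hJ'v
    linear_combination (norm := module) hJ'v
  obtain ⟨hre, him⟩ := eq_zero_of_smul_add_smul_apply_eq_zero hJ hv hsq
  have ha : a = 0 := by
    rcases mul_eq_zero.mp him with h | h <;> linarith
  have hb1 : b = 1 := by subst ha; nlinarith
  rw [h₁, ha, hb1, zero_smul, one_smul, zero_add]

end LinearMap

theorem stmt7_general {V : Type*} [AddCommGroup V] [Module ℝ V]
    (n : ℕ) (hn : 2 ≤ n) (hdim : Module.finrank ℝ V = 2 * n)
    (J J' : V →ₗ[ℝ] V)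
    (hJ : ∀ v : V, J (J v) = -v) (hJ' : ∀ v : V, J' (J' v) = -v)
    (h1 : ∀ v : V, v ≠ 0 → ∃ a b : ℝ, 0 < b ∧ J' v = a • v + b • J v) :
    J = J' := by
  choose! a b hb hab using h1
  ext v
  rcases eq_or_ne v 0 with rfl | hv
  · simp
  have hJv : J v ≠ 0 := fun h ↦ hv (by simpa [h] using (hJ v).symm)
  obtain ⟨w, hw⟩ := exists_notMem_complexLine J (by omega) v
  obtain ⟨ha₁, hb₁⟩ := coeff_eq_of_notMem_complexLine hJ hab hv hw
  obtain ⟨ha₂, hb₂⟩ :=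
    coeff_eq_of_notMem_complexLine hJ hab hJv (by rwa [complexLine_apply hJ])
  refine (apply_eq_of_apply_eq_smul_add_smul hJ hv (hJ' v) (hb v hv) (hab v hv) ?_).symm
  rw [hab _ hJv, ha₂, hb₂, ← ha₁, ← hb₁]

/-- A complex structure on `ℝ^{2n}`, `n ≥ 2`, is determined by its oriented complex
lines: if every oriented `J`-complex line is an oriented `J'`-complex line (i.e. for
each `v ≠ 0`, `J' v = a • v + b • J v` with `b > 0`) and vice versa, then `J = J'`. -/
theorem stmt7 {V : Type*} [AddCommGroup V] [Module ℝ V] [FiniteDimensional ℝ V]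
    (n : ℕ) (hn : 2 ≤ n) (hdim : Module.finrank ℝ V = 2 * n)
    (J J' : V →ₗ[ℝ] V)
    (hJ : ∀ v : V, J (J v) = -v) (hJ' : ∀ v : V, J' (J' v) = -v)
    (h1 : ∀ v : V, v ≠ 0 → ∃ a b : ℝ, 0 < b ∧ J' v = a • v + b • J v)
    (h2 : ∀ v : V, v ≠ 0 → ∃ a b : ℝ, 0 < b ∧ J v = a • v + b • J' v) :
    J = J' :=
  stmt7_general n hn hdim J J' hJ hJ' h1
end

section
/- Let V be a finite-dimensional real vector space with skew-symmetric bilinear form ω, and let J₁, J₂ be ω-compatible complex structures on V (each Jᵢ is ω-tame and ω(Jᵢv, Jᵢw) = ω(v,w) for all v,w). Then for t ∈ [0,1], B = (1-t)J₁ + tJ₂ is skew-adjoint with respect to the positive-definite symmetric bilinear form g(v,w) = ω(v, Bw), i.e. g(Bv, w) = -g(v, Bw) for all v, w. -/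
/-!
Compatibility `ω(Jv, Jw) = ω(v, w)` together with `J² = -1` and skew-symmetry makes each
`ω(·, Jᵢ ·)` symmetric, and symmetry is preserved by linear combinations of the `Jᵢ`; tameness is
preserved by convex combinations since `ω(v, Bv) = (1-t) ω(v, J₁v) + t ω(v, J₂v)`. Skew-adjointness
of `B` for `g` is then symmetry of `g` followed by skew-symmetry of `ω`:
`g(Bv, w) = ω(Bv, Bw) = -ω(Bw, Bv) = -g(w, Bv) = -g(v, Bw)`.
-/

section Symmetric

variable {R V : Type*} [CommRing R] [AddCommGroup V] [Module R V] {ω : V →ₗ[R] V →ₗ[R] R}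

theorem apply_apply_comm_of_compatible (hskew : ∀ v w : V, ω v w = -ω w v) {J : V →ₗ[R] V}
    (hJ : ∀ v : V, J (J v) = -v) (hcomp : ∀ v w : V, ω (J v) (J w) = ω v w) (v w : V) :
    ω v (J w) = ω w (J v) := by
  calc ω v (J w) = ω (J v) (J (J w)) := (hcomp v (J w)).symm
    _ = -ω (J v) w := by rw [hJ, map_neg]
    _ = ω w (J v) := by rw [hskew (J v) w, neg_neg]

theorem apply_smul_add_smul_comm {A C : V →ₗ[R] V} (hA : ∀ v w : V, ω v (A w) = ω w (A v))
    (hC : ∀ v w : V, ω v (C w) = ω w (C v)) (a b : R) (v w : V) :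
    ω v ((a • A + b • C) w) = ω w ((a • A + b • C) v) := by
  simp only [LinearMap.add_apply, LinearMap.smul_apply, map_add, map_smul, hA v w, hC v w]

theorem apply_apply_eq_neg_of_comm (hskew : ∀ v w : V, ω v w = -ω w v) {B : V →ₗ[R] V}
    (hB : ∀ v w : V, ω v (B w) = ω w (B v)) (v w : V) :
    ω (B v) (B w) = -ω v (B (B w)) := by
  rw [hB v (B w), hskew (B w) (B v), neg_neg]

end Symmetric

theorem convex_setOf_pos_apply_apply {𝕜 V : Type*} [Field 𝕜] [LinearOrder 𝕜]
    [IsStrictOrderedRing 𝕜] [AddCommGroup V] [Module 𝕜 V] (ω : V →ₗ[𝕜] V →ₗ[𝕜] 𝕜) :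
    Convex 𝕜 {J : V →ₗ[𝕜] V | ∀ v : V, v ≠ 0 → 0 < ω v (J v)} := by
  intro J₁ h₁ J₂ h₂ a b ha hb hab v hv
  simp only [LinearMap.add_apply, LinearMap.smul_apply, map_add, map_smul, smul_eq_mul]
  exact convex_Ioi (0 : 𝕜) (h₁ v hv) (h₂ v hv) ha hb hab

theorem stmt8_general {V : Type*} [AddCommGroup V] [Module ℝ V]
    (ω : V →ₗ[ℝ] V →ₗ[ℝ] ℝ) (hskew : ∀ v w : V, ω v w = -ω w v)
    (J₁ J₂ : V →ₗ[ℝ] V)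
    (hJ₁ : ∀ v : V, J₁ (J₁ v) = -v) (hJ₂ : ∀ v : V, J₂ (J₂ v) = -v)
    (htame₁ : ∀ v : V, v ≠ 0 → 0 < ω v (J₁ v))
    (htame₂ : ∀ v : V, v ≠ 0 → 0 < ω v (J₂ v))
    (hcomp₁ : ∀ v w : V, ω (J₁ v) (J₁ w) = ω v w)
    (hcomp₂ : ∀ v w : V, ω (J₂ v) (J₂ w) = ω v w)
    (t : ℝ) (ht0 : 0 ≤ t) (ht1 : t ≤ 1)
    (B : V →ₗ[ℝ] V) (hB : B = (1 - t) • J₁ + t • J₂) :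
    (∀ v w : V, ω v (B w) = ω w (B v)) ∧
    (∀ v : V, v ≠ 0 → 0 < ω v (B v)) ∧
    (∀ v w : V, ω (B v) (B w) = -ω v (B (B w))) := by
  subst hB
  have hsym := apply_smul_add_smul_comm (apply_apply_comm_of_compatible hskew hJ₁ hcomp₁)
    (apply_apply_comm_of_compatible hskew hJ₂ hcomp₂) (1 - t) t
  exact ⟨hsym, convex_setOf_pos_apply_apply ω htame₁ htame₂ (sub_nonneg.2 ht1) ht0
    (sub_add_cancel 1 t), apply_apply_eq_neg_of_comm hskew hsym⟩

/-- For two `ω`-compatible complex structures `J₁, J₂` and `t ∈ [0,1]`, the operator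
`B = (1-t)J₁ + tJ₂` is skew-adjoint with respect to the positive-definite symmetric
form `g(v,w) = ω(v, Bw)`. -/
theorem stmt8 {V : Type*} [AddCommGroup V] [Module ℝ V] [FiniteDimensional ℝ V]
    (ω : V →ₗ[ℝ] V →ₗ[ℝ] ℝ) (hskew : ∀ v w : V, ω v w = -ω w v)
    (J₁ J₂ : V →ₗ[ℝ] V)
    (hJ₁ : ∀ v : V, J₁ (J₁ v) = -v) (hJ₂ : ∀ v : V, J₂ (J₂ v) = -v)
    (htame₁ : ∀ v : V, v ≠ 0 → 0 < ω v (J₁ v))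
    (htame₂ : ∀ v : V, v ≠ 0 → 0 < ω v (J₂ v))
    (hcomp₁ : ∀ v w : V, ω (J₁ v) (J₁ w) = ω v w)
    (hcomp₂ : ∀ v w : V, ω (J₂ v) (J₂ w) = ω v w)
    (t : ℝ) (ht0 : 0 ≤ t) (ht1 : t ≤ 1)
    (B : V →ₗ[ℝ] V) (hB : B = (1 - t) • J₁ + t • J₂) :
    (∀ v w : V, ω v (B w) = ω w (B v)) ∧
    (∀ v : V, v ≠ 0 → 0 < ω v (B v)) ∧
    (∀ v w : V, ω (B v) (B w) = -ω v (B (B w))) :=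
  stmt8_general ω hskew J₁ J₂ hJ₁ hJ₂ htame₁ htame₂ hcomp₁ hcomp₂ t ht0 ht1 B hB
end
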